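/- The discrete Hilbert transform on ℓ²(ℤ), given by the matrix h_{jk} = 1/(j−k) for j ≠ k and h_{jj} = 0, defines a bounded linear operator on ℓ²(ℤ) with operator norm at most π. -/

import Mathlib

/-!
The matrix `(1 / (j - k))` is the Laurent matrix `(φ̂ (j - k))` of the sawtooth
`φ x = -2πi B₁(x) = πi (1 - 2x)` on `(0, 1]`, whose Fourier coefficients are `1 / n` (and `0`
for `n = 0`). Transported to `ℓ²(ℤ)` by the Fourier isometry `L²(ℝ/ℤ) ≃ ℓ²(ℤ)`, multiplication
by `φ` is therefore the discrete Hilbert transform, and its norm is at most `‖φ‖_∞ = π`.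
-/

open MeasureTheory AddCircle Complex
open scoped ENNReal Real

namespace MeasureTheory.Lp

variable {α : Type*} [MeasurableSpace α] {μ : Measure α}

noncomputable def mulOperator (φ : Lp ℂ ∞ μ) : Lp ℂ 2 μ →L[ℂ] Lp ℂ 2 μ :=
  (ContinuousLinearMap.mul ℂ ℂ).holderL μ ∞ 2 2 φ

theorem norm_mulOperator_le (φ : Lp ℂ ∞ μ) : ‖mulOperator φ‖ ≤ ‖φ‖ :=
  calc ‖mulOperator φ‖ ≤ ‖ContinuousLinearMap.mul ℂ ℂ‖ * ‖φ‖ :=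
        ((ContinuousLinearMap.mul ℂ ℂ).holderL μ ∞ 2 2).le_of_opNorm_le
          (ContinuousLinearMap.norm_holderL_le _) φ
    _ ≤ ‖φ‖ := mul_le_of_le_one_left (norm_nonneg φ) (ContinuousLinearMap.opNorm_mul_le ℂ ℂ)

theorem coeFn_mulOperator (φ : Lp ℂ ∞ μ) (f : Lp ℂ 2 μ) :
    mulOperator φ f =ᵐ[μ] fun x => φ x * f x :=
  ContinuousLinearMap.coeFn_holder _ φ f

end MeasureTheory.Lp

namespace AddCircle

section Laurent

variable {T : ℝ} [Fact (0 < T)]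

theorem fourierCoeff_mul_fourier (f : AddCircle T → ℂ) (j k : ℤ) :
    fourierCoeff (fun x => f x * fourier k x) j = fourierCoeff f (j - k) := by
  refine integral_congr_ae (.of_forall fun x => ?_)
  simp only [smul_eq_mul]
  rw [show -(j - k) = -j + k by ring, fourier_add]
  ring

noncomputable def laurentOperator (φ : Lp ℂ ∞ (haarAddCircle (T := T))) :
    lp (fun _ : ℤ => ℂ) 2 →L[ℂ] lp (fun _ : ℤ => ℂ) 2 :=
  fourierBasis.repr.toContinuousLinearEquiv.conjContinuousAlgEquiv (Lp.mulOperator φ)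

theorem norm_laurentOperator_le (φ : Lp ℂ ∞ (haarAddCircle (T := T))) :
    ‖laurentOperator φ‖ ≤ ‖φ‖ := by
  rw [laurentOperator, ContinuousLinearEquiv.conjContinuousAlgEquiv_apply]
  exact ((LinearIsometry.norm_toContinuousLinearMap_comp fourierBasis.repr.toLinearIsometry).trans
    (ContinuousLinearMap.opNorm_comp_linearIsometryEquiv _ fourierBasis.repr.symm)).trans_le
    (Lp.norm_mulOperator_le φ)

theorem laurentOperator_single_one (φ : Lp ℂ ∞ (haarAddCircle (T := T))) (j k : ℤ) :
    laurentOperator φ (lp.single 2 k 1) j = fourierCoeff φ (j - k) := by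
  have hmul : (Lp.mulOperator φ (fourierLp 2 k) : AddCircle T → ℂ)
      =ᵐ[haarAddCircle] fun x => φ x * fourier k x := by
    filter_upwards [Lp.coeFn_mulOperator φ (fourierLp 2 k), coeFn_fourierLp 2 k] with x hx hk
    rw [hx, hk]
  change fourierBasis.repr (Lp.mulOperator φ (fourierBasis.repr.symm (lp.single 2 k 1))) j = _
  rw [HilbertBasis.repr_symm_single, coe_fourierBasis, fourierBasis_repr,
    fourierCoeff_congr_ae hmul, fourierCoeff_mul_fourier]

theorem hasSum_laurentOperator_apply (φ : Lp ℂ ∞ (haarAddCircle (T := T)))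
    (a : lp (fun _ : ℤ => ℂ) 2) (j : ℤ) :
    HasSum (fun k => fourierCoeff φ (j - k) * a k) (laurentOperator φ a j) := by
  refine ((lp.hasSum_single ENNReal.ofNat_ne_top a).mapL
    ((lp.evalCLM ℂ (fun _ : ℤ => ℂ) 2 j).comp (laurentOperator φ))).congr_fun fun k => ?_
  have hsingle : lp.single (E := fun _ : ℤ => ℂ) 2 k (a k) = a k • lp.single 2 k 1 := by
    rw [← lp.single_smul, smul_eq_mul, mul_one]
  rw [ContinuousLinearMap.comp_apply, hsingle, map_smul, map_smul, smul_eq_mul, mul_comm]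
  exact congrArg (a k * ·) (laurentOperator_single_one φ j k).symm

end Laurent

theorem measurable_liftIoc {T : ℝ} [Fact (0 < T)] {B : Type*} [MeasurableSpace B] {t : ℝ}
    {f : ℝ → B} (hf : Measurable f) : Measurable (liftIoc T t f) :=
  (hf.comp measurable_subtype_coe).comp (measurableEquivIoc T t).measurable

section Sawtooth

local instance : Fact ((0 : ℝ) < 1) := ⟨one_pos⟩

noncomputable def sawtooth : AddCircle (1 : ℝ) → ℂ :=
  liftIoc 1 0 fun x => -2 * π * I * bernoulliFun 1 x

/-- At `n = 0` both sides vanish, the right one because `(0 : ℂ)⁻¹ = 0`. -/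
theorem fourierCoeff_sawtooth (n : ℤ) : fourierCoeff sawtooth n = (n : ℂ)⁻¹ := by
  rw [sawtooth, fourierCoeff_liftIoc_eq, fourierCoeffOn.const_mul]
  simp only [zero_add]
  change _ * bernoulliFourierCoeff 1 n = _
  rcases eq_or_ne n 0 with rfl | hn
  · simp [bernoulliFourierCoeff_zero one_ne_zero]
  · have hn' : (n : ℂ) ≠ 0 := Int.cast_ne_zero.mpr hn
    rw [bernoulliFourierCoeff_eq one_ne_zero]
    field_simp
    simp

theorem norm_sawtooth_le (x : AddCircle (1 : ℝ)) : ‖sawtooth x‖ ≤ π := by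
  obtain ⟨ht0, ht1⟩ := (equivIoc 1 0 x).2
  change ‖-2 * π * I * bernoulliFun 1 (equivIoc 1 0 x)‖ ≤ π
  have hconst : ‖-2 * π * I‖ = 2 * π := by simp [abs_of_pos Real.pi_pos]
  have hB : |bernoulliFun 1 (equivIoc 1 0 x)| ≤ 1 / 2 := by
    rw [bernoulliFun_one, abs_le]
    constructor <;> linarith
  rw [norm_mul, hconst, Complex.norm_real, Real.norm_eq_abs]
  nlinarith [Real.pi_pos]

theorem measurable_sawtooth : Measurable sawtooth :=
  measurable_liftIoc (by fun_prop)

theorem memLp_top_sawtooth : MemLp sawtooth ∞ haarAddCircle :=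
  memLp_top_of_bound measurable_sawtooth.aestronglyMeasurable π (.of_forall norm_sawtooth_le)

noncomputable def sawtoothLp : Lp ℂ ∞ (@haarAddCircle 1 _) :=
  memLp_top_sawtooth.toLp sawtooth

theorem norm_sawtoothLp_le : ‖sawtoothLp‖ ≤ π := by
  refine (Lp.norm_le_of_ae_bound Real.pi_pos.le ?_).trans (by simp)
  filter_upwards [memLp_top_sawtooth.coeFn_toLp] with x hx
  rw [sawtoothLp, hx]
  exact norm_sawtooth_le x

theorem fourierCoeff_sawtoothLp (n : ℤ) : fourierCoeff sawtoothLp n = (n : ℂ)⁻¹ := by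
  rw [sawtoothLp, fourierCoeff_congr_ae memLp_top_sawtooth.coeFn_toLp, fourierCoeff_sawtooth]

end Sawtooth

end AddCircle

/-- The discrete Hilbert transform on `ℓ²(ℤ)`, given by the matrix `h j k = 1/(j-k)` for
`j ≠ k` and `0` on the diagonal, defines a bounded linear operator on `ℓ²(ℤ)` with
operator norm at most `π`. -/
theorem discrete_hilbert_transform_bounded :
    ∃ H : lp (fun _ : ℤ => ℂ) 2 →L[ℂ] lp (fun _ : ℤ => ℂ) 2,
      ‖H‖ ≤ Real.pi ∧
      ∀ (a : lp (fun _ : ℤ => ℂ) 2) (j : ℤ),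
        (H a : ∀ _ : ℤ, ℂ) j = ∑' k : ℤ, if k = j then 0 else a k / ((j : ℂ) - (k : ℂ)) := by
  refine ⟨laurentOperator sawtoothLp,
    (norm_laurentOperator_le _).trans norm_sawtoothLp_le, fun a j => ?_⟩
  have hterm (k : ℤ) : fourierCoeff sawtoothLp (j - k) * a k =
      if k = j then 0 else a k / ((j : ℂ) - (k : ℂ)) := by
    rw [fourierCoeff_sawtoothLp]
    split_ifs with hkj
    · simp [hkj]
    · push_cast
      ring
  simpa only [hterm] using (hasSum_laurentOperator_apply sawtoothLp a j).tsum_eq.symm
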